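/- arXiv:1302.4181 — 2 statements merged into one kernel-verified Lean document; each statement's English description precedes it below -/
import Mathlib

section
/- The unique positive root k₁ = k₁(λ) of F_λ is strictly decreasing in the jump intensity: if 0 ≤ λ < λ̂ (with σ, γ, μ, r, 𝔪 fixed) then k₁(λ̂) < k₁(λ). -/
/-!
Write `F_λ(k) = ½σ²k² + μk − r + λ G(k)` with `G(k) = γ m̄ k + ∫ e^{−γzk} 𝔪(dz) − 1`.
Since `e^x > 1 + x` for `x ≠ 0` and `𝔪` lives on `(0, ∞)`, `G > 0` on `(0, ∞)`, so
`F_λ̂ > F_λ` there and `F_λ̂(k₁(λ)) > 0`. But `F_λ̂` is convex on `[0, ∞)` with `F_λ̂(0) = −r < 0`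
and `F_λ̂(k₁(λ̂)) = 0`, so `F_λ̂ ≤ 0` on `[0, k₁(λ̂)]`; hence `k₁(λ̂) < k₁(λ)`.
-/

open Set MeasureTheory Real

theorem integral_pos_of_ae_pos {α : Type*} [MeasurableSpace α] {μ : Measure α} [NeZero μ]
    {f : α → ℝ} (hf : ∀ᵐ x ∂μ, 0 < f x) (hfi : Integrable f μ) : 0 < ∫ x, f x ∂μ := by
  rw [integral_pos_iff_support_of_nonneg_ae (hf.mono fun _ hx => hx.le) hfi, pos_iff_ne_zero]
  intro h
  obtain ⟨x, hx, hx'⟩ := (hf.and (measure_eq_zero_iff_ae_notMem.1 h)).exists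
  exact hx' hx.ne'

section
variable {m : Measure ℝ} {c : ℝ}

theorem integrable_exp_neg_mul_mul [IsFiniteMeasure m] (hm : ∀ᵐ z ∂m, 0 ≤ z) (hc : 0 ≤ c)
    {k : ℝ} (hk : 0 ≤ k) : Integrable (fun z => exp (-(c * z * k))) m := by
  refine (integrable_const 1).mono' (by fun_prop) ?_
  filter_upwards [hm] with z hz
  rw [norm_of_nonneg (exp_pos _).le, exp_le_one_iff, neg_nonpos]
  positivity

theorem convexOn_integral_exp_neg_mul_mul [IsFiniteMeasure m] (hm : ∀ᵐ z ∂m, 0 ≤ z)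
    (hc : 0 ≤ c) : ConvexOn ℝ (Ici 0) fun k => ∫ z, exp (-(c * z * k)) ∂m := by
  refine ⟨convex_Ici 0, fun x hx y hy a b ha hb hab => ?_⟩
  simp only [smul_eq_mul]
  have hpt (z : ℝ) : exp (-(c * z * (a * x + b * y))) ≤
      a * exp (-(c * z * x)) + b * exp (-(c * z * y)) := by
    rw [show -(c * z * (a * x + b * y)) = a • -(c * z * x) + b • -(c * z * y) by
      simp only [smul_eq_mul]; ring]
    exact convexOn_exp.2 (mem_univ _) (mem_univ _) ha hb hab
  have hix := integrable_exp_neg_mul_mul hm hc hx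
  have hiy := integrable_exp_neg_mul_mul hm hc hy
  calc ∫ z, exp (-(c * z * (a * x + b * y))) ∂m
      ≤ ∫ z, (a * exp (-(c * z * x)) + b * exp (-(c * z * y))) ∂m :=
        integral_mono (integrable_exp_neg_mul_mul hm hc ((convex_Ici 0) hx hy ha hb hab))
          ((hix.const_mul a).add (hiy.const_mul b)) hpt
    _ = _ := by
        rw [integral_add (hix.const_mul a) (hiy.const_mul b), integral_const_mul,
          integral_const_mul]

theorem one_sub_mul_integral_lt_integral_exp_neg_mul_mul [IsProbabilityMeasure m]
    (hm : ∀ᵐ z ∂m, 0 < z) (hint : Integrable (fun z => z) m) (hc : 0 < c) {k : ℝ} (hk : 0 < k) :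
    1 - c * (∫ z, z ∂m) * k < ∫ z, exp (-(c * z * k)) ∂m := by
  have hexp := integrable_exp_neg_mul_mul (hm.mono fun _ hz => hz.le) hc.le hk.le
  have hlin : Integrable (fun z => c * z * k) m := (hint.const_mul c).mul_const k
  have hsub : Integrable (fun z => 1 - c * z * k) m := (integrable_const 1).sub hlin
  have hgap : 0 < ∫ z, (exp (-(c * z * k)) - (1 - c * z * k)) ∂m := by
    refine integral_pos_of_ae_pos ?_ (hexp.sub hsub)
    filter_upwards [hm] with z hz
    have := add_one_lt_exp (x := -(c * z * k)) (by have := mul_pos (mul_pos hc hz) hk; linarith)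
    linarith
  rw [integral_sub hexp hsub, integral_sub (integrable_const 1) hlin,
    integral_mul_const, integral_const_mul] at hgap
  simp only [integral_const, probReal_univ, one_smul] at hgap
  linarith
end

/-- `F_λ(k)`, with `λ` written `l` and `m̄` unfolded to `∫ z ∂m`. -/
noncomputable def arithmeticCharacteristic (sigma gamma mu r : ℝ) (m : Measure ℝ) (l k : ℝ) : ℝ :=
  1 / 2 * sigma ^ 2 * k ^ 2 + (mu + gamma * l * ∫ z, z ∂m) * k +
    l * ∫ z, exp (-(gamma * z * k)) ∂m - (r + l)

section
variable {sigma gamma mu r : ℝ} {m : Measure ℝ}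

theorem arithmeticCharacteristic_zero [IsProbabilityMeasure m] (l : ℝ) :
    arithmeticCharacteristic sigma gamma mu r m l 0 = -r := by
  simp [arithmeticCharacteristic]

theorem convexOn_arithmeticCharacteristic [IsFiniteMeasure m] (hm : ∀ᵐ z ∂m, 0 ≤ z)
    (hgamma : 0 ≤ gamma) {l : ℝ} (hl : 0 ≤ l) :
    ConvexOn ℝ (Ici 0) (arithmeticCharacteristic sigma gamma mu r m l) := by
  have hquad : ConvexOn ℝ (Ici 0) fun k : ℝ => (1 / 2 * sigma ^ 2) • k ^ 2 :=
    (convexOn_pow 2).smul (by positivity)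
  have hlin : ConvexOn ℝ (Ici 0) fun k : ℝ => (mu + gamma * l * ∫ z, z ∂m) * k :=
    (LinearMap.mulLeft ℝ _).convexOn (convex_Ici 0)
  have hjump := (convexOn_integral_exp_neg_mul_mul hm hgamma).smul hl
  refine (((hquad.add hlin).add hjump).add_const (-(r + l))).congr fun k _ => ?_
  simp only [arithmeticCharacteristic, Pi.add_apply, smul_eq_mul]
  ring

theorem arithmeticCharacteristic_nonpos_of_le_root [IsProbabilityMeasure m]
    (hm : ∀ᵐ z ∂m, 0 ≤ z) (hgamma : 0 ≤ gamma) (hr : 0 ≤ r) {l K k : ℝ} (hl : 0 ≤ l)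
    (hK : arithmeticCharacteristic sigma gamma mu r m l K = 0) (hk : k ∈ Icc 0 K) :
    arithmeticCharacteristic sigma gamma mu r m l k ≤ 0 := by
  have hK₀ : 0 ≤ K := hk.1.trans hk.2
  have hseg : arithmeticCharacteristic sigma gamma mu r m l k ≤
      max (arithmeticCharacteristic sigma gamma mu r m l 0)
        (arithmeticCharacteristic sigma gamma mu r m l K) :=
    (convexOn_arithmeticCharacteristic hm hgamma hl).le_on_segment (mem_Ici.2 le_rfl) hK₀
      (by rwa [segment_eq_Icc hK₀])
  rw [arithmeticCharacteristic_zero, hK] at hseg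
  exact hseg.trans (max_le (neg_nonpos.2 hr) le_rfl)

theorem strictMono_arithmeticCharacteristic [IsProbabilityMeasure m] (hm : ∀ᵐ z ∂m, 0 < z)
    (hint : Integrable (fun z => z) m) (hgamma : 0 < gamma) {k : ℝ} (hk : 0 < k) :
    StrictMono fun l => arithmeticCharacteristic sigma gamma mu r m l k := by
  intro l l' hll'
  have hjump : 0 < gamma * (∫ z, z ∂m) * k + (∫ z, exp (-(gamma * z * k)) ∂m) - 1 := by
    linarith [one_sub_mul_integral_lt_integral_exp_neg_mul_mul hm hint hgamma hk]
  have hdiff : arithmeticCharacteristic sigma gamma mu r m l' k -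
      arithmeticCharacteristic sigma gamma mu r m l k =
      (l' - l) * (gamma * (∫ z, z ∂m) * k + (∫ z, exp (-(gamma * z * k)) ∂m) - 1) := by
    simp only [arithmeticCharacteristic]
    ring
  have := mul_pos (sub_pos.2 hll') hjump
  dsimp only
  linarith

end

theorem arithmetic_root_decreasing_in_intensity_general
    (sigma gamma mu r : ℝ)
    (hgamma : 0 < gamma) (hr : 0 < r)
    (m : Measure ℝ) [IsProbabilityMeasure m]
    (hm : m (Ioi 0)ᶜ = 0)
    (hint : Integrable (fun z => z) m)
    (mbar : ℝ) (hmbar : mbar = ∫ z, z ∂m)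
    (k₁ : ℝ → ℝ)
    (hk₁ : ∀ l : ℝ, 0 ≤ l → 0 < k₁ l ∧
      1 / 2 * sigma ^ 2 * k₁ l ^ 2 + (mu + gamma * l * mbar) * k₁ l +
        l * ∫ z, Real.exp (-(gamma * z * k₁ l)) ∂m - (r + l) = 0) :
    ∀ l lhat : ℝ, 0 ≤ l → l < lhat → k₁ lhat < k₁ l := by
  subst hmbar
  intro l lhat hl hll
  have hpos : ∀ᵐ z ∂m, 0 < z := mem_ae_iff.2 hm
  obtain ⟨hk, hroot⟩ := hk₁ l hl
  obtain ⟨-, hroot'⟩ := hk₁ lhat (hl.trans hll.le)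
  by_contra! hle
  have hnonpos := arithmeticCharacteristic_nonpos_of_le_root (hpos.mono fun _ => le_of_lt)
    hgamma.le hr.le (hl.trans hll.le) hroot' ⟨hk.le, hle⟩
  exact absurd hroot
    ((strictMono_arithmeticCharacteristic hpos hint hgamma hk hll).trans_le hnonpos).ne

/-- The unique positive root `k₁(λ)` of the arithmetic characteristic equation is
strictly decreasing in the jump intensity `λ` (Theorem 5.2 of the paper,
arithmetic case). -/
theorem arithmetic_root_decreasing_in_intensity
    (sigma gamma mu r : ℝ)
    (hsigma : 0 < sigma) (hgamma : 0 < gamma) (hr : 0 < r)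
    (m : Measure ℝ) [IsProbabilityMeasure m]
    (hm : m (Ioi 0)ᶜ = 0)
    (hint : Integrable (fun z => z) m)
    (mbar : ℝ) (hmbar : mbar = ∫ z, z ∂m)
    (k₁ : ℝ → ℝ)
    (hk₁ : ∀ l : ℝ, 0 ≤ l → 0 < k₁ l ∧
      1 / 2 * sigma ^ 2 * k₁ l ^ 2 + (mu + gamma * l * mbar) * k₁ l +
        l * ∫ z, Real.exp (-(gamma * z * k₁ l)) ∂m - (r + l) = 0) :
    ∀ l lhat : ℝ, 0 ≤ l → l < lhat → k₁ lhat < k₁ l :=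
  arithmetic_root_decreasing_in_intensity_general sigma gamma mu r hgamma hr m hm hint mbar hmbar k₁
    hk₁
end

section
/- Let k₁ = k₁(σ) denote the unique positive root of F as a function of the volatility σ > 0 (with α, λ, r, 𝔪 fixed). If α < r, then k₁ is strictly decreasing in σ: 0 < σ < σ̂ implies k₁(σ̂) < k₁(σ); if α > r, then k₁ is strictly increasing in σ: 0 < σ < σ̂ implies k₁(σ̂) > k₁(σ). -/
/-!
For fixed `σ` the characteristic function `F_σ` is convex on `[0, ∞)` (a convex quadratic plus
`λ` times an average of the convex functions `k ↦ (1 - z) ^ k`) and `F_σ 0 = -r < 0`, so it is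
negative strictly between `0` and its positive root and positive beyond it. Since
`F_σ 1 = α - r`, the root lies above `1` when `α < r` and below `1` when `α > r`. Finally
`F_σ̂ k - F_σ k = ½ (σ̂² - σ²) k (k - 1)`, so at `k = k₁(σ)` the function `F_σ̂` is positive
when `k₁(σ) > 1` and negative when `k₁(σ) < 1`, which places `k₁(σ̂)` on the required side.
-/

open Set MeasureTheory

namespace ConvexOn

variable {s : Set ℝ} {f : ℝ → ℝ} {a k x : ℝ}

theorem root_lt_of_pos (hf : ConvexOn ℝ s f) (ha : a ∈ s) (hk : k ∈ s) (hfa : f a < 0)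
    (hfk : f k = 0) (hax : a ≤ x) (hfx : 0 < f x) : k < x := by
  by_contra! hxk
  have hx : x ∈ segment ℝ a k := by
    rw [segment_eq_Icc (hax.trans hxk)]
    exact ⟨hax, hxk⟩
  have := hf.le_on_segment ha hk hx
  rw [hfk, max_eq_right hfa.le] at this
  linarith

theorem lt_root_of_neg (hf : ConvexOn ℝ s f) (ha : a ∈ s) (hx : x ∈ s) (hak : a < k)
    (hfa : f a < 0) (hfk : f k = 0) (hfx : f x < 0) : x < k := by
  by_contra! hkx
  obtain rfl | hkx := hkx.eq_or_lt
  · linarith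
  have hk : k ∈ openSegment ℝ a x := by
    rw [openSegment_eq_Ioo (hak.trans hkx)]
    exact ⟨hak, hkx⟩
  have := hf.lt_right_of_left_lt ha hx hk (hfk ▸ hfa)
  linarith

end ConvexOn

theorem convexOn_quadratic {a : ℝ} (ha : 0 ≤ a) (b c : ℝ) :
    ConvexOn ℝ univ fun x : ℝ => a * x ^ 2 + b * x + c := by
  refine ⟨convex_univ, fun x _ y _ t u ht hu htu => ?_⟩
  simp only [smul_eq_mul]
  obtain rfl : u = 1 - t := by linarith
  nlinarith [mul_nonneg (mul_nonneg ht hu) (mul_nonneg ha (sq_nonneg (x - y)))]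

theorem convexOn_integral {α E : Type*} [MeasurableSpace α] {μ : Measure α}
    [AddCommGroup E] [Module ℝ E] {s : Set E} {f : E → α → ℝ} (hs : Convex ℝ s)
    (hf : ∀ᵐ z ∂μ, ConvexOn ℝ s (f · z)) (hint : ∀ x ∈ s, Integrable (f x) μ) :
    ConvexOn ℝ s fun x => ∫ z, f x z ∂μ := by
  refine ⟨hs, fun x hx y hy a b ha hb hab => ?_⟩
  have hxy : a • x + b • y ∈ s := hs hx hy ha hb hab
  calc ∫ z, f (a • x + b • y) z ∂μ ≤ ∫ z, a * f x z + b * f y z ∂μ := by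
        refine integral_mono_ae (hint _ hxy)
          (((hint x hx).const_mul a).add ((hint y hy).const_mul b)) ?_
        filter_upwards [hf] with z hz
        exact hz.2 hx hy ha hb hab
    _ = a • ∫ z, f x z ∂μ + b • ∫ z, f y z ∂μ := by
        rw [integral_add ((hint x hx).const_mul a) ((hint y hy).const_mul b),
          integral_const_mul, integral_const_mul, smul_eq_mul, smul_eq_mul]

section OneSubRpow

variable {m : Measure ℝ} (hm : ∀ᵐ z ∂m, z ∈ Ioo 0 1)
include hm

theorem integrable_one_sub_rpow [IsFiniteMeasure m] {k : ℝ} (hk : 0 ≤ k) :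
    Integrable (fun z : ℝ => (1 - z) ^ k) m := by
  refine Integrable.mono' (integrable_const 1)
    ((measurable_const.sub measurable_id).pow_const k).aestronglyMeasurable ?_
  filter_upwards [hm] with z hz
  have hpos : 0 ≤ 1 - z := by linarith [hz.2]
  rw [Real.norm_eq_abs, abs_of_nonneg (Real.rpow_nonneg hpos k)]
  exact Real.rpow_le_one hpos (by linarith [hz.1]) hk

theorem convexOn_integral_one_sub_rpow [IsFiniteMeasure m] :
    ConvexOn ℝ (Ici 0) fun k : ℝ => ∫ z, (1 - z) ^ k ∂m := by
  refine convexOn_integral (convex_Ici 0) ?_ fun k hk => integrable_one_sub_rpow hm hk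
  filter_upwards [hm] with z hz
  exact (convexOn_rpow_left (by linarith [hz.2])).subset (subset_univ _) (convex_Ici 0)

end OneSubRpow

/-- The function `F` of the paper at volatility `σ = s`. -/
noncomputable def geometricCharacteristic (alpha lam r mbar : ℝ) (m : Measure ℝ) (s k : ℝ) :
    ℝ :=
  1 / 2 * s ^ 2 * k * (k - 1) + (alpha + lam * mbar) * k - (r + lam) +
    lam * ∫ z, (1 - z) ^ k ∂m

namespace geometricCharacteristic

variable {alpha lam r mbar : ℝ} {m : Measure ℝ}

theorem convexOn [IsFiniteMeasure m] (hlam : 0 ≤ lam) (hm : ∀ᵐ z ∂m, z ∈ Ioo 0 1) (s : ℝ) :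
    ConvexOn ℝ (Ici 0) (geometricCharacteristic alpha lam r mbar m s) := by
  have hquad := convexOn_quadratic (by positivity : 0 ≤ 1 / 2 * s ^ 2)
    (alpha + lam * mbar - 1 / 2 * s ^ 2) (-(r + lam))
  have hF : geometricCharacteristic alpha lam r mbar m s =
      (fun x => 1 / 2 * s ^ 2 * x ^ 2 + (alpha + lam * mbar - 1 / 2 * s ^ 2) * x + -(r + lam)) +
        fun k : ℝ => lam • ∫ z, (1 - z) ^ k ∂m := by
    ext k
    simp only [geometricCharacteristic, Pi.add_apply, smul_eq_mul]
    ring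
  rw [hF]
  exact (hquad.subset (subset_univ _) (convex_Ici 0)).add
    ((convexOn_integral_one_sub_rpow hm).smul hlam)

theorem apply_zero [IsProbabilityMeasure m] (s : ℝ) :
    geometricCharacteristic alpha lam r mbar m s 0 = -r := by
  simp [geometricCharacteristic]

theorem apply_one [IsProbabilityMeasure m] (hint : Integrable (fun z => z) m)
    (hmbar : mbar = ∫ z, z ∂m) (s : ℝ) :
    geometricCharacteristic alpha lam r mbar m s 1 = alpha - r := by
  simp only [geometricCharacteristic, Real.rpow_one]
  rw [integral_sub (integrable_const 1) hint, ← hmbar]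
  simp only [integral_const, probReal_univ, smul_eq_mul]
  ring

variable {s shat k : ℝ}

theorem apply_eq_of_apply_eq_zero (h : geometricCharacteristic alpha lam r mbar m s k = 0) :
    geometricCharacteristic alpha lam r mbar m shat k =
      1 / 2 * (shat ^ 2 - s ^ 2) * k * (k - 1) := by
  unfold geometricCharacteristic at h ⊢
  linear_combination h

theorem pos_of_apply_eq_zero_of_one_lt (hs : 0 ≤ s) (hss : s < shat) (hk : 1 < k)
    (h : geometricCharacteristic alpha lam r mbar m s k = 0) :
    0 < geometricCharacteristic alpha lam r mbar m shat k := by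
  rw [apply_eq_of_apply_eq_zero h]
  have hsq : 0 < shat ^ 2 - s ^ 2 := sub_pos.2 (pow_lt_pow_left₀ hss hs two_ne_zero)
  exact mul_pos (mul_pos (mul_pos one_half_pos hsq) (zero_lt_one.trans hk)) (sub_pos.2 hk)

theorem neg_of_apply_eq_zero_of_lt_one (hs : 0 ≤ s) (hss : s < shat) (hk₀ : 0 < k) (hk : k < 1)
    (h : geometricCharacteristic alpha lam r mbar m s k = 0) :
    geometricCharacteristic alpha lam r mbar m shat k < 0 := by
  rw [apply_eq_of_apply_eq_zero h]
  have hsq : 0 < shat ^ 2 - s ^ 2 := sub_pos.2 (pow_lt_pow_left₀ hss hs two_ne_zero)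
  exact mul_neg_of_pos_of_neg (mul_pos (mul_pos one_half_pos hsq) hk₀) (sub_neg.2 hk)

end geometricCharacteristic

/-- Geometric case of the paper's Theorem 5.1: the unique positive root `k₁(σ)` of
the geometric characteristic equation is strictly decreasing in the volatility `σ`
when `α < r` and strictly increasing in `σ` when `α > r`. -/
theorem geometric_root_monotone_in_volatility
    (alpha lam r : ℝ)
    (hlam : 0 ≤ lam) (hr : 0 < r)
    (m : Measure ℝ) [IsProbabilityMeasure m]
    (hm : m (Ioo 0 1)ᶜ = 0)
    (hint : Integrable (fun z => z) m)
    (mbar : ℝ) (hmbar : mbar = ∫ z, z ∂m)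
    (k₁ : ℝ → ℝ)
    (hk₁ : ∀ s : ℝ, 0 < s → 0 < k₁ s ∧
      1 / 2 * s ^ 2 * k₁ s * (k₁ s - 1) + (alpha + lam * mbar) * k₁ s -
        (r + lam) + lam * ∫ z, (1 - z) ^ (k₁ s) ∂m = 0) :
    (alpha < r → ∀ s shat : ℝ, 0 < s → s < shat → k₁ shat < k₁ s) ∧
    (r < alpha → ∀ s shat : ℝ, 0 < s → s < shat → k₁ s < k₁ shat) := by
  set F := geometricCharacteristic alpha lam r mbar m
  have hconv (s : ℝ) : ConvexOn ℝ (Ici 0) (F s) :=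
    geometricCharacteristic.convexOn hlam (ae_iff.2 hm) s
  have hF0 (s : ℝ) : F s 0 < 0 :=
    (geometricCharacteristic.apply_zero s).trans_lt (neg_neg_of_pos hr)
  have hF1 (s : ℝ) : F s 1 = alpha - r := geometricCharacteristic.apply_one hint hmbar s
  have hroot (s : ℝ) (hs : 0 < s) : F s (k₁ s) = 0 := (hk₁ s hs).2
  have h0 : (0 : ℝ) ∈ Ici 0 := self_mem_Ici
  constructor
  · intro har s shat hs hss
    have hshat : 0 < shat := hs.trans hss
    have hk1 : 1 < k₁ s := (hconv s).lt_root_of_neg h0 (mem_Ici.2 zero_le_one) (hk₁ s hs).1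
      (hF0 s) (hroot s hs) (by rw [hF1]; linarith)
    exact (hconv shat).root_lt_of_pos h0 (hk₁ shat hshat).1.le (hF0 shat) (hroot shat hshat)
      (hk₁ s hs).1.le
      (geometricCharacteristic.pos_of_apply_eq_zero_of_one_lt hs.le hss hk1 (hroot s hs))
  · intro har s shat hs hss
    have hshat : 0 < shat := hs.trans hss
    have hk1 : k₁ s < 1 := (hconv s).root_lt_of_pos h0 (hk₁ s hs).1.le (hF0 s) (hroot s hs)
      zero_le_one (by rw [hF1]; linarith)
    exact (hconv shat).lt_root_of_neg h0 (hk₁ s hs).1.le (hk₁ shat hshat).1 (hF0 shat)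
      (hroot shat hshat)
      (geometricCharacteristic.neg_of_apply_eq_zero_of_lt_one hs.le hss (hk₁ s hs).1 hk1
        (hroot s hs))
end
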